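/- arXiv:2505.04513 — 3 statements merged into one kernel-verified Lean document; each statement's English description precedes it below -/
import Mathlib

section
/- Let p, q be coprime positive integers with q < p and p/q = [a_0, a_1, ..., a_n] with all a_i ≥ 2. Suppose a_i = 2 for 0 ≤ i ≤ t-1 and a_t > 2 for some 1 ≤ t ≤ n, and let p_t/q_t = [a_t, ..., a_n] in lowest terms. Then (p - q)/q' = (p_t - q_t)/q_t, where 0 < q' < p - q is the reduction of q modulo p - q; in particular q' = q_t. -/
/-- Hirzebruch–Jung continued fraction `[a₀, a₁, …, aₙ] = a₀ - 1/(a₁ - 1/(… - 1/aₙ))`. -/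
def hjCF : List ℤ → ℚ
  | [] => 0
  | a :: l => (a : ℚ) - (hjCF l)⁻¹

lemma hj_gt_one : ∀ l : List ℤ, l ≠ [] → (∀ x ∈ l, 2 ≤ x) → 1 < hjCF l := by
  intro l
  induction l with
  | nil => simp
  | cons h r ih =>
    intro _ hmem
    have h2 : (2 : ℚ) ≤ (h : ℚ) := by exact_mod_cast hmem h (by simp)
    rcases eq_or_ne r [] with rfl | hr
    · simp [hjCF]; linarith
    · have h1 := ih hr (fun x hx => hmem x (by simp [hx]))
      have hpos : (0 : ℚ) < hjCF r := by linarith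
      have hinv : (hjCF r)⁻¹ < 1 := by
        rw [inv_lt_one_iff₀]; right; exact h1
      have hinv0 : 0 < (hjCF r)⁻¹ := by positivity
      simp only [hjCF]
      linarith

lemma hj_rep (P Q : ℚ) (hQ : 0 < Q) (hPQ : Q < P) (l : List ℤ) (hl : hjCF l = P / Q) :
    ∀ k : ℕ, hjCF (List.replicate k 2 ++ l) = (P + k * (P - Q)) / (Q + k * (P - Q)) := by
  intro k
  induction k with
  | zero => simpa using hl
  | succ k ih =>
    have hd : (0 : ℚ) < P - Q := by linarith
    have hk : (0 : ℚ) ≤ (k : ℚ) := Nat.cast_nonneg _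
    have hden : 0 < Q + k * (P - Q) := by nlinarith
    have hnum : 0 < P + k * (P - Q) := by nlinarith
    rw [List.replicate_succ, List.cons_append]
    show (2 : ℤ) - (hjCF (List.replicate k 2 ++ l))⁻¹ = _
    rw [ih]
    rw [inv_div]
    push_cast
    field_simp
    ring

theorem stmt1 (n t : ℕ) (a : ℕ → ℤ) (p q pt qt : ℤ)
    (ha : ∀ i ≤ n, 2 ≤ a i)
    (ht1 : 1 ≤ t) (htn : t ≤ n)
    (h2 : ∀ i < t, a i = 2) (hat : 2 < a t)
    (hq : 0 < q) (hqp : q < p) (hpq : IsCoprime p q)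
    (hfull : hjCF (List.ofFn fun i : Fin (n + 1) => a i) = (p : ℚ) / q)
    (hqt : 0 < qt) (hptqt : qt < pt) (hcopt : IsCoprime pt qt)
    (htail : hjCF (List.ofFn fun i : Fin (n + 1 - t) => a (t + i)) = (pt : ℚ) / qt) :
    0 < q % (p - q) ∧ q % (p - q) < p - q ∧
      ((p : ℚ) - q) / ((q % (p - q) : ℤ) : ℚ) = ((pt : ℚ) - qt) / qt ∧
      q % (p - q) = qt := by
  -- split the full list
  set L : List ℤ := List.ofFn fun i : Fin (n + 1 - t) => a (t + i) with hLdef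
  have hsplit : (List.ofFn fun i : Fin (n + 1) => a i) = List.replicate t (2 : ℤ) ++ L := by
    apply List.ext_getElem
    · simp [hLdef]; omega
    · intro i h1 h2'
      simp only [List.getElem_ofFn]
      rw [List.getElem_append]
      split_ifs with h
      · simp only [List.getElem_replicate]
        exact h2 i (by simpa using h)
      · simp only [hLdef, List.getElem_ofFn]
        congr 1
        simp at h ⊢
        omega
  -- headed decomposition of the tail
  have hL : L = a t :: List.ofFn (fun i : Fin (n - t) => a (t + 1 + i)) := by
    apply List.ext_getElem
    · simp [hLdef]; omega
    · intro i h1 h2'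
      rcases i with _ | i
      · simp [hLdef]
      · simp only [hLdef, List.getElem_ofFn, List.getElem_cons_succ]
        congr 1
        omega
  -- pt > 2 qt
  have hqtQ : (0 : ℚ) < (qt : ℚ) := by exact_mod_cast hqt
  have h2qt : 2 * qt < pt := by
    have hv : (2 : ℚ) < (pt : ℚ) / qt := by
      rw [← htail, hL]
      have ha3 : (3 : ℚ) ≤ (a t : ℚ) := by exact_mod_cast hat
      set r : List ℤ := List.ofFn (fun i : Fin (n - t) => a (t + 1 + i)) with hrdef
      rcases eq_or_ne r [] with hre | hre
      · rw [hre]; simp [hjCF]; linarith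
      · have hr1 : 1 < hjCF r := by
          apply hj_gt_one r hre
          intro x hx
          rw [hrdef, List.mem_ofFn] at hx
          obtain ⟨i, rfl⟩ := hx
          exact ha (t + 1 + i) (by omega)
        have hinv : (hjCF r)⁻¹ < 1 := by
          rw [inv_lt_one_iff₀]; right; exact hr1
        simp only [hjCF]
        linarith
    rw [lt_div_iff₀ hqtQ] at hv
    exact_mod_cast hv
  -- value of the full fraction via hj_rep
  have hptQ : (qt : ℚ) < (pt : ℚ) := by exact_mod_cast hptqt
  have hrep := hj_rep (pt : ℚ) (qt : ℚ) hqtQ hptQ L htail t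
  rw [hsplit, hrep] at hfull
  -- cross multiply
  set D : ℤ := pt - qt with hDdef
  have hD : 0 < D := by omega
  have hP : (pt : ℚ) + (t : ℚ) * ((pt : ℚ) - qt) = ((pt + t * D : ℤ) : ℚ) := by
    push_cast [hDdef]; ring
  have hQ : (qt : ℚ) + (t : ℚ) * ((pt : ℚ) - qt) = ((qt + t * D : ℤ) : ℚ) := by
    push_cast [hDdef]; ring
  rw [hP, hQ] at hfull
  have htD : 0 ≤ (t : ℤ) * D := mul_nonneg (Int.natCast_nonneg t) hD.le
  have hQpos : 0 < qt + t * D := by linarith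
  have hPpos : 0 < pt + t * D := by linarith
  have hqQ : (q : ℚ) ≠ 0 := by exact_mod_cast hq.ne'
  have hQQ : ((qt + t * D : ℤ) : ℚ) ≠ 0 := by exact_mod_cast hQpos.ne'
  have hcross : p * (qt + t * D) = (pt + t * D) * q := by
    have := (div_eq_div_iff hqQ hQQ).mp hfull.symm
    exact_mod_cast this
  -- coprimality of the transformed pair
  have hcop' : IsCoprime (pt + t * D) (qt + t * D) := by
    obtain ⟨u, v, huv⟩ := hcopt
    refine ⟨u * (1 - t) - v * t, u * t + v * (1 + t), ?_⟩
    rw [hDdef]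
    linear_combination huv
  -- identify p and q
  have hdvd1 : p ∣ (pt + t * D) :=
    hpq.dvd_of_dvd_mul_right ⟨qt + t * D, hcross.symm⟩
  have hdvd2 : (pt + t * D) ∣ p :=
    hcop'.dvd_of_dvd_mul_right ⟨q, hcross⟩
  have hp' : p = pt + t * D := Int.dvd_antisymm (by omega) (by omega) hdvd1 hdvd2
  have hq' : q = qt + t * D := by
    have : (pt + t * D) * q = (pt + t * D) * (qt + t * D) := by
      rw [← hcross, hp']
    exact mul_left_cancel₀ hPpos.ne' this
  have hsub : p - q = D := by rw [hp', hq']; ring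
  have hqtD : qt < D := by omega
  have hmod : q % (p - q) = qt := by
    rw [hsub, hq', mul_comm (t : ℤ) D, Int.add_mul_emod_self_left]
    exact Int.emod_eq_of_lt hqt.le hqtD
  refine ⟨by rw [hmod]; exact hqt, by rw [hmod, hsub]; exact hqtD, ?_, hmod⟩
  rw [hmod]
  congr 1
  have : ((p : ℚ) - q) = ((p - q : ℤ) : ℚ) := by push_cast; ring
  rw [this, hsub, hDdef]
  push_cast
  ring
end

section
/- Let m_1, ..., m_n be integers with m_i ≥ 2 and s/t = [m_1, ..., m_n] with 0 < t < s coprime. Let M^1 be the matrix obtained from the tridiagonal matrix M(m_1, ..., m_n) (diagonal -m_i, off-diagonals 1) by replacing its first column with the column vector (m_1-2, m_2-2, ..., m_n-2)^T. Then det M^1 = (-1)^{n+1}(s - t - 1). -/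
/-- The tridiagonal matrix with `-mᵢ` on the diagonal and `1` on the sub- and
super-diagonals. -/
def triM {n : ℕ} (m : Fin n → ℤ) : Matrix (Fin n) (Fin n) ℤ :=
  Matrix.of fun i j =>
    if i = j then -m i
    else if (i : ℕ) + 1 = (j : ℕ) ∨ (j : ℕ) + 1 = (i : ℕ) then 1 else 0

/-!
Write `K(m₁, …, mₙ)` for the continuant, `K() = 1`, `K(a) = a`,
`K(a, b, …) = a K(b, …) - K(…)`. Expanding along the first row shows
`det M(m) = (-1)ⁿ K(m)`, and for `mᵢ ≥ 2` one has `[m₁, …, mₙ] = K(m) / K(m₂, …, mₙ)` with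
`0 < K(m₂, …, mₙ)` and the two continuants coprime, so `s = K(m)` and `t = K(m₂, …, mₙ)`.
Expanding `det M¹` along its first row, whose only nonzero entries are `m₁ - 2` and `1`, gives
`det M¹(m) = (m₁ - 2) det M(m₂, …) - det M¹(m₂, …)`, and induction yields
`det M¹ = (-1)ⁿ⁺¹ (K(m) - K(m₂, …, mₙ) - 1)`.
-/

def continuant : List ℤ → ℤ
  | [] => 1
  | [a] => a
  | a :: b :: l => a * continuant (b :: l) - continuant l

theorem continuant_cons_cons (a b : ℤ) (l : List ℤ) :
    continuant (a :: b :: l) = a * continuant (b :: l) - continuant l := rfl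

theorem continuant_pos_and_lt_cons :
    ∀ (a : ℤ) (l : List ℤ), (∀ x ∈ a :: l, 2 ≤ x) →
      0 < continuant l ∧ continuant l < continuant (a :: l)
  | a, [], h => by
    have := h a (.head _)
    simp only [continuant]
    omega
  | a, b :: l, h => by
    obtain ⟨hpos, hlt⟩ := continuant_pos_and_lt_cons b l fun x hx => h x (.tail a hx)
    have ha : 2 ≤ a := h a (.head _)
    refine ⟨by omega, ?_⟩
    rw [continuant_cons_cons]
    nlinarith

theorem isCoprime_continuant_cons : ∀ (a : ℤ) (l : List ℤ),
    IsCoprime (continuant (a :: l)) (continuant l)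
  | a, [] => by simp [continuant, isCoprime_one_right]
  | a, b :: l => by
    rw [continuant_cons_cons, mul_comm, IsCoprime.mul_sub_left_left_iff]
    exact (isCoprime_continuant_cons b l).symm

theorem hjCF_cons_eq_continuant_div : ∀ (a : ℤ) (l : List ℤ), (∀ x ∈ a :: l, 2 ≤ x) →
    hjCF (a :: l) = continuant (a :: l) / continuant l
  | a, [], _ => by simp [hjCF, continuant]
  | a, b :: l, h => by
    have ih := hjCF_cons_eq_continuant_div b l fun x hx => h x (.tail a hx)
    have hpos := (continuant_pos_and_lt_cons b l fun x hx => h x (.tail a hx)).1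
    have hpos' := (continuant_pos_and_lt_cons a (b :: l) h).1
    rw [hjCF, ih, continuant_cons_cons, inv_div]
    field_simp
    push_cast
    ring

theorem continuant_ofFn_succ_succ {n : ℕ} (m : Fin (n + 2) → ℤ) :
    continuant (List.ofFn m) = m 0 * continuant (List.ofFn fun i => m i.succ)
      - continuant (List.ofFn fun i => m i.succ.succ) := by
  rw [List.ofFn_succ, List.ofFn_succ]
  rfl

namespace Matrix

variable {R : Type*} [CommRing R]

theorem det_eq_of_row_zero_eq_zero {n : ℕ} (A : Matrix (Fin (n + 2)) (Fin (n + 2)) R)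
    (h : ∀ j : Fin n, A 0 j.succ.succ = 0) :
    A.det = A 0 0 * (A.submatrix Fin.succ Fin.succ).det
      - A 0 1 * (A.submatrix Fin.succ (Fin.succAbove 1)).det := by
  rw [det_succ_row_zero, Fin.sum_univ_succ, Fin.sum_univ_succ]
  simp [h, sub_eq_add_neg]

theorem det_updateCol_zero_single_zero {n : ℕ} (A : Matrix (Fin (n + 1)) (Fin (n + 1)) R) :
    (A.updateCol 0 (Pi.single 0 1)).det = (A.submatrix Fin.succ Fin.succ).det := by
  rw [det_succ_column_zero, Fin.sum_univ_succ, ← Fin.succAbove_zero, submatrix_updateCol_succAbove]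
  simp

end Matrix

open Matrix

section triM

variable {n : ℕ}

theorem triM_submatrix_succ_succ (m : Fin (n + 1) → ℤ) :
    (triM m).submatrix Fin.succ Fin.succ = triM fun i => m i.succ := by
  ext i j
  simp only [submatrix_apply, triM, of_apply, Fin.val_succ, Fin.succ_inj]
  grind

theorem triM_zero_one (m : Fin (n + 2) → ℤ) : triM m 0 1 = 1 := by
  simp [triM, Fin.ext_iff]

theorem triM_zero_succ_succ (m : Fin (n + 2) → ℤ) (j : Fin n) : triM m 0 j.succ.succ = 0 := by
  simp [triM, Fin.ext_iff]

theorem triM_succ_zero (m : Fin (n + 2) → ℤ) :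
    (fun i : Fin (n + 1) => triM m i.succ 0) = Pi.single 0 1 := by
  ext i
  cases i using Fin.cases <;> simp [triM, Fin.ext_iff]

theorem updateCol_triM_submatrix_succ_succAbove_one (m : Fin (n + 2) → ℤ) (v : Fin (n + 2) → ℤ) :
    ((triM m).updateCol 0 v).submatrix Fin.succ (Fin.succAbove 1)
      = (triM fun i => m i.succ).updateCol 0 fun i => v i.succ := by
  ext i j
  cases j using Fin.cases with
  | zero => simp
  | succ k =>
    simp only [submatrix_apply, Fin.one_succAbove_succ, updateCol_apply, Fin.succ_ne_zero,
      if_false]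
    exact congrFun (congrFun (triM_submatrix_succ_succ m) i) k.succ

theorem det_updateCol_triM (m : Fin (n + 2) → ℤ) (v : Fin (n + 2) → ℤ) :
    ((triM m).updateCol 0 v).det
      = v 0 * (triM fun i => m i.succ).det
        - ((triM fun i => m i.succ).updateCol 0 fun i => v i.succ).det := by
  rw [det_eq_of_row_zero_eq_zero _ fun j => by simp [triM_zero_succ_succ],
    ← Fin.succAbove_zero, submatrix_updateCol_succAbove, Fin.succAbove_zero,
    triM_submatrix_succ_succ, updateCol_triM_submatrix_succ_succAbove_one]
  simp [triM_zero_one]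

theorem det_triM : ∀ {n : ℕ} (m : Fin n → ℤ), (triM m).det = (-1) ^ n * continuant (List.ofFn m)
  | 0, _ => by simp [continuant]
  | 1, m => by simp [triM, continuant]
  | n + 2, m => by
    rw [← updateCol_eq_self (triM m) 0, det_updateCol_triM, triM_succ_zero,
      det_updateCol_zero_single_zero, triM_submatrix_succ_succ, det_triM, det_triM,
      continuant_ofFn_succ_succ]
    simp only [triM, of_apply, if_true]
    ring

theorem det_updateCol_triM_sub_two : ∀ {n : ℕ} (m : Fin (n + 1) → ℤ),
    ((triM m).updateCol 0 fun i => m i - 2).det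
      = (-1) ^ n * (continuant (List.ofFn m) - continuant (List.ofFn fun i => m i.succ) - 1)
  | 0, m => by simp [continuant, sub_sub, one_add_one_eq_two]
  | n + 1, m => by
    rw [det_updateCol_triM, det_updateCol_triM_sub_two, det_triM, continuant_ofFn_succ_succ m]
    ring

end triM

theorem Int.eq_and_eq_of_div_eq_div {a b c d : ℤ} (hb : 0 < b) (hd : 0 < d)
    (hab : IsCoprime a b) (hcd : IsCoprime c d) (h : (a : ℚ) / b = c / d) : a = c ∧ b = d :=
  Rat.div_int_inj hb hd (isCoprime_iff_gcd_eq_one.mp hab) (isCoprime_iff_gcd_eq_one.mp hcd) h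

theorem stmt3_general (n : ℕ) (hn : 0 < n) (m : Fin n → ℤ) (s t : ℤ)
    (hm : ∀ i, 2 ≤ m i) (ht : 0 < t) (hcop : IsCoprime s t)
    (hcf : hjCF (List.ofFn m) = (s : ℚ) / t) :
    ((triM m).updateCol ⟨0, hn⟩ (fun i => m i - 2)).det = (-1) ^ (n + 1) * (s - t - 1) := by
  obtain ⟨k, rfl⟩ := Nat.exists_eq_succ_of_ne_zero hn.ne'
  have hm' : ∀ x ∈ List.ofFn m, 2 ≤ x := List.forall_mem_ofFn_iff.mpr hm
  rw [List.ofFn_succ] at hm' hcf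
  rw [hjCF_cons_eq_continuant_div _ _ hm'] at hcf
  obtain ⟨rfl, rfl⟩ := Int.eq_and_eq_of_div_eq_div (continuant_pos_and_lt_cons _ _ hm').1 ht
    (isCoprime_continuant_cons _ _) hcop hcf
  rw [Fin.mk_zero, det_updateCol_triM_sub_two, List.ofFn_succ, pow_succ]
  ring

theorem stmt3 (n : ℕ) (hn : 0 < n) (m : Fin n → ℤ) (s t : ℤ)
    (hm : ∀ i, 2 ≤ m i) (ht : 0 < t) (hts : t < s) (hcop : IsCoprime s t)
    (hcf : hjCF (List.ofFn m) = (s : ℚ) / t) :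
    ((triM m).updateCol ⟨0, hn⟩ (fun i => m i - 2)).det = (-1) ^ (n + 1) * (s - t - 1) :=
  stmt3_general n hn m s t hm ht hcop hcf
end

section
/- Let m_1, ..., m_n be integers with m_i ≥ 2, s/t = [m_1, ..., m_n] with 0 < t < s coprime, and M = M(m_1, ..., m_n) the tridiagonal matrix with diagonal -m_i and off-diagonals 1. Let w be the solution of M w = (m_1-2, ..., m_n-2)^T. Then the first component of w equals -1 + (1+t)/s. -/
open Matrix

/-- `suffixContinuant l k` is the continuant of `l.drop k` for `k ≤ l.length`; its value `0` at
`k = l.length + 1` makes the three-term recurrence hold up to the last index. -/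
def suffixContinuant : List ℤ → ℕ → ℤ
  | [], k => if k = 0 then 1 else 0
  | a :: l, 0 => a * suffixContinuant l 0 - suffixContinuant l 1
  | _ :: l, k + 1 => suffixContinuant l k

namespace suffixContinuant

theorem length_eq_one : ∀ l : List ℤ, suffixContinuant l l.length = 1
  | [] => rfl
  | _ :: l => length_eq_one l

theorem length_succ_eq_zero : ∀ l : List ℤ, suffixContinuant l (l.length + 1) = 0
  | [] => rfl
  | _ :: l => length_succ_eq_zero l

theorem recurrence : ∀ (l : List ℤ) (k : ℕ) (hk : k < l.length),
    suffixContinuant l k + suffixContinuant l (k + 2) = l[k] * suffixContinuant l (k + 1)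
  | a :: l, 0, _ => by simp only [suffixContinuant, List.getElem_cons_zero]; ring
  | _ :: l, k + 1, hk => recurrence l k (by simpa using hk)

theorem one_nonneg_and_one_lt_zero : ∀ l : List ℤ, (∀ x ∈ l, 2 ≤ x) →
    0 ≤ suffixContinuant l 1 ∧ suffixContinuant l 1 < suffixContinuant l 0
  | [], _ => by simp [suffixContinuant]
  | a :: l, h => by
    obtain ⟨h1, h0⟩ := one_nonneg_and_one_lt_zero l fun x hx => h x (by simp [hx])
    have ha : 2 ≤ a := h a (by simp)
    simp only [suffixContinuant]
    constructor <;> nlinarith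

theorem isCoprime : ∀ l : List ℤ, IsCoprime (suffixContinuant l 0) (suffixContinuant l 1)
  | [] => by simpa [suffixContinuant] using isCoprime_one_left
  | a :: l => by
    simp only [suffixContinuant]
    simpa [sub_eq_neg_add, mul_comm] using ((isCoprime l).symm.neg_left).add_mul_right_left a

theorem hjCF_eq : ∀ l : List ℤ, (∀ x ∈ l, 2 ≤ x) →
    hjCF l = suffixContinuant l 0 / suffixContinuant l 1
  | [], _ => by simp [hjCF, suffixContinuant]
  | a :: l, h => by
    have hl : ∀ x ∈ l, 2 ≤ x := fun x hx => h x (by simp [hx])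
    have h0 : (suffixContinuant l 0 : ℚ) ≠ 0 := by
      have := one_nonneg_and_one_lt_zero l hl
      exact_mod_cast (by omega : suffixContinuant l 0 ≠ 0)
    rw [hjCF, hjCF_eq l hl]
    simp only [suffixContinuant]
    push_cast
    field_simp

theorem eq_of_hjCF_eq {l : List ℤ} (hl : l ≠ []) (h2 : ∀ x ∈ l, 2 ≤ x) {s t : ℤ}
    (ht : 0 < t) (hcop : IsCoprime s t) (h : hjCF l = s / t) :
    suffixContinuant l 0 = s ∧ suffixContinuant l 1 = t := by
  obtain ⟨a, l', rfl⟩ := List.exists_cons_of_ne_nil hl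
  have hpos : 0 < suffixContinuant (a :: l') 1 := by
    have := one_nonneg_and_one_lt_zero l' fun x hx => h2 x (by simp [hx])
    simp only [suffixContinuant]
    omega
  exact Rat.div_int_inj hpos ht (Int.isCoprime_iff_nat_coprime.1 (isCoprime _))
    (Int.isCoprime_iff_nat_coprime.1 hcop) ((hjCF_eq _ h2).symm.trans h)

end suffixContinuant

theorem sum_mul_sub_two_of_recurrence {R : Type*} [CommRing R] (a X : ℕ → R) (N : ℕ)
    (hX : ∀ k < N, X k + X (k + 2) = a k * X (k + 1)) :
    ∑ k ∈ Finset.range N, X (k + 1) * (a k - 2) = X 0 - X 1 - X N + X (N + 1) := by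
  induction N with
  | zero => simp
  | succ N ih =>
    rw [Finset.sum_range_succ, ih fun k hk => hX k (by omega)]
    linear_combination -hX N (by omega)

theorem Matrix.IsSymm.dotProduct_mulVec_comm {ι α : Type*} [Fintype ι] [CommSemiring α]
    {A : Matrix ι ι α} (hA : A.IsSymm) (x y : ι → α) : x ⬝ᵥ (A *ᵥ y) = (A *ᵥ x) ⬝ᵥ y := by
  rw [dotProduct_mulVec, ← vecMul_transpose, hA.eq]

section triM

variable {n : ℕ} (m : Fin n → ℤ) {R : Type*} [CommRing R]

theorem triM_isSymm : (triM m).IsSymm := by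
  refine IsSymm.ext fun i j => ?_
  by_cases h : j = i <;> simp [triM, h, eq_comm (a := i), or_comm]

theorem triM_mulVec_apply (X : ℕ → R) (hX : X (n + 1) = 0)
    (i : Fin n) :
    ((triM m).map (Int.cast : ℤ → R) *ᵥ fun j => X (j + 1)) i =
      X i - m i * X (i + 1) + X (i + 2) - if (i : ℕ) = 0 then X 0 else 0 := by
  have entry : ∀ j : Fin n, (triM m).map (Int.cast : ℤ → R) i j * X (j + 1) =
      (if (j : ℕ) = i then -m i * X (i + 1) else 0) + (if (j : ℕ) = i + 1 then X (i + 2) else 0) +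
        (if (j : ℕ) + 1 = i then X i else 0) := by
    rintro ⟨j, hj⟩
    obtain ⟨i, hi⟩ := i
    simp only [triM, map_apply, of_apply, Fin.ext_iff]
    split_ifs <;> first | (exfalso; omega) | (subst_vars; push_cast; ring_nf)
  have hlast : (if (i : ℕ) + 1 ∈ Finset.range n then X (i + 2) else 0) = X (i + 2) := by
    split_ifs with h
    · rfl
    · rw [Finset.mem_range] at h
      rw [show (i : ℕ) + 2 = n + 1 by omega, hX]
  simp only [mulVec, dotProduct, entry]
  rw [Fin.sum_univ_eq_sum_range (fun k => (if k = (i : ℕ) then -m i * X (i + 1) else 0) +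
      (if k = i + 1 then X (i + 2) else 0) + (if k + 1 = i then X i else 0)),
    Finset.sum_add_distrib, Finset.sum_add_distrib, Finset.sum_ite_eq', Finset.sum_ite_eq',
    if_pos (Finset.mem_range.2 i.isLt), hlast]
  obtain ⟨_ | i, hi⟩ := i
  · simp only [Nat.add_eq_zero_iff, one_ne_zero, and_false, if_false, Finset.sum_const_zero,
      if_true]
    ring
  · simp only [add_left_inj, Finset.sum_ite_eq', Finset.mem_range, if_pos (Nat.lt_of_succ_lt hi),
      Nat.add_one_ne_zero, if_false]
    ring

local notation "K" => suffixContinuant (List.ofFn m)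

theorem suffixContinuant_ofFn_length : K n = 1 := by
  simpa using suffixContinuant.length_eq_one (List.ofFn m)

theorem suffixContinuant_ofFn_length_succ : K (n + 1) = 0 := by
  simpa using suffixContinuant.length_succ_eq_zero (List.ofFn m)

theorem suffixContinuant_ofFn_recurrence (k : ℕ) (hk : k < n) :
    (K k : R) + K (k + 2) = ((List.ofFn m).getD k 0 : R) * K (k + 1) := by
  have hkL : k < (List.ofFn m).length := by simpa using hk
  rw [List.getD_eq_getElem _ _ hkL]
  have h := congrArg (Int.cast : ℤ → R) (suffixContinuant.recurrence _ k hkL)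
  push_cast at h
  exact h

theorem triM_mulVec_suffixContinuant :
    (triM m).map (Int.cast : ℤ → R) *ᵥ (fun j : Fin n => (K (j + 1) : R)) =
      fun i : Fin n => if (i : ℕ) = 0 then -(K 0 : R) else 0 := by
  ext i
  have hi := suffixContinuant_ofFn_recurrence (R := R) m i i.isLt
  rw [List.getD_eq_getElem _ _ (by simp), List.getElem_ofFn, Fin.eta] at hi
  rw [triM_mulVec_apply m (fun k => (K k : R)) (by simp [suffixContinuant_ofFn_length_succ]) i]
  split_ifs with h
  · rw [h] at hi ⊢
    linear_combination hi
  · linear_combination hi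

theorem suffixContinuant_dotProduct_sub_two :
    (fun j : Fin n => (K (j + 1) : R)) ⬝ᵥ (fun i => (m i : R) - 2) = K 0 - K 1 - 1 := by
  have hm : ∀ i : Fin n, (m i : R) = ((List.ofFn m).getD i 0 : R) := by simp
  simp only [dotProduct, hm]
  rw [Fin.sum_univ_eq_sum_range (fun k => (K (k + 1) : R) * (((List.ofFn m).getD k 0 : ℤ) - 2)),
    sum_mul_sub_two_of_recurrence _ (fun k => (K k : R)) n
      (suffixContinuant_ofFn_recurrence m)]
  simp only [suffixContinuant_ofFn_length, suffixContinuant_ofFn_length_succ]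
  push_cast
  ring

end triM

theorem stmt4_general (n : ℕ) (hn : 0 < n) (m : Fin n → ℤ) (s t : ℤ) (w : Fin n → ℚ)
    (hm : ∀ i, 2 ≤ m i) (ht : 0 < t) (hcop : IsCoprime s t)
    (hcf : hjCF (List.ofFn m) = (s : ℚ) / t)
    (hw : ((triM m).map (Int.cast : ℤ → ℚ)).mulVec w = fun i => (m i : ℚ) - 2) :
    w ⟨0, hn⟩ = -1 + (1 + (t : ℚ)) / s := by
  have h2 : ∀ x ∈ List.ofFn m, 2 ≤ x := by
    simpa only [List.mem_ofFn, forall_exists_index, forall_apply_eq_imp_iff] using hm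
  obtain ⟨hK0, hK1⟩ :=
    suffixContinuant.eq_of_hjCF_eq (by simpa using hn.ne') h2 ht hcop hcf
  have hs0 : (s : ℚ) ≠ 0 := by
    have := suffixContinuant.one_nonneg_and_one_lt_zero _ h2
    exact_mod_cast (by omega : s ≠ 0)
  have key := ((triM_isSymm m).map (Int.cast : ℤ → ℚ)).dotProduct_mulVec_comm
    (fun j => (suffixContinuant (List.ofFn m) (j + 1) : ℚ)) w
  rw [hw, suffixContinuant_dotProduct_sub_two, triM_mulVec_suffixContinuant, dotProduct,
    Fintype.sum_eq_single ⟨0, hn⟩ fun i hi => by rw [if_neg (fun h => hi (Fin.ext h)), zero_mul],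
    if_pos rfl, hK0, hK1] at key
  field_simp
  linear_combination key

theorem stmt4 (n : ℕ) (hn : 0 < n) (m : Fin n → ℤ) (s t : ℤ) (w : Fin n → ℚ)
    (hm : ∀ i, 2 ≤ m i) (ht : 0 < t) (hts : t < s) (hcop : IsCoprime s t)
    (hcf : hjCF (List.ofFn m) = (s : ℚ) / t)
    (hw : ((triM m).map (Int.cast : ℤ → ℚ)).mulVec w = fun i => (m i : ℚ) - 2) :
    w ⟨0, hn⟩ = -1 + (1 + (t : ℚ)) / s :=
  stmt4_general n hn m s t w hm ht hcop hcf hw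
end
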